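/- For every n > 3 there exists an integer i with 1 ≤ i ≤ 49 and i ≤ n − 3 such that SG(n − i) = 2, where SG is the Sprague–Grundy function of the game i-Mark({1},{2,3}). (Every interval of 49 consecutive positions, lying in [3, ∞), contains a position with SG value 2.) -/
import Mathlib

/-- The minimum excludant of a finite set of naturals. -/
noncomputable def mex (s : Finset ℕ) : ℕ := sInf {x : ℕ | x ∉ s}

/-- Sprague–Grundy function of the game i-Mark({1},{2,3}):
from a positive pile of `n` tokens one may subtract `1`,
or move to `n / 2` if `2 ∣ n`, or to `n / 3` if `3 ∣ n`. -/
noncomputable def sg : ℕ → ℕ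
  | 0 => 0
  | n + 1 =>
    mex ({sg n} ∪
         (if 2 ∣ (n + 1) then {sg ((n + 1) / 2)} else ∅) ∪
         (if 3 ∣ (n + 1) then {sg ((n + 1) / 3)} else ∅))
termination_by n => n
decreasing_by
  · omega
  · exact Nat.div_lt_self (Nat.succ_pos n) (by norm_num)
  · exact Nat.div_lt_self (Nat.succ_pos n) (by norm_num)

/-! ### mex lemmas -/

lemma mex_notMem (s : Finset ℕ) : mex s ∉ s := by
  have hne : {x : ℕ | x ∉ s}.Nonempty := by
    refine ⟨s.sup id + 1, fun hmem => ?_⟩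
    have := Finset.le_sup (f := id) hmem
    simp only [id] at this
    omega
  exact Nat.sInf_mem hne

lemma mex_le {s : Finset ℕ} {m : ℕ} (h : m ∉ s) : mex s ≤ m := Nat.sInf_le h

lemma mex_eq_zero {s : Finset ℕ} (h : 0 ∉ s) : mex s = 0 :=
  Nat.sInf_eq_zero.mpr (Or.inl h)

lemma mex_singleton_zero : mex {0} = 1 := by
  have h1 := mex_notMem ({0} : Finset ℕ)
  have h2 : mex {0} ≤ 1 := mex_le (by simp)
  simp only [Finset.mem_singleton] at h1
  omega

lemma mex_pair_01 : mex {0, 1} = 2 := by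
  have h1 := mex_notMem ({0, 1} : Finset ℕ)
  have h2 : mex {0, 1} ≤ 2 := mex_le (by simp)
  simp only [Finset.mem_insert, Finset.mem_singleton] at h1
  omega

lemma mex_pair_10 : mex {1, 0} = 2 := by
  rw [Finset.pair_comm]; exact mex_pair_01

lemma mex_pair_zero {y : ℕ} (h : y ≠ 1) : mex {0, y} = 1 := by
  have h1 := mex_notMem ({0, y} : Finset ℕ)
  have h2 : mex {0, y} ≤ 1 := mex_le (by simp; omega)
  simp only [Finset.mem_insert, Finset.mem_singleton] at h1
  omega

/-! ### sg evaluation lemmas -/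

lemma sg_succ (n : ℕ) : sg (n+1) =
    mex ({sg n} ∪
         (if 2 ∣ (n + 1) then {sg ((n + 1) / 2)} else ∅) ∪
         (if 3 ∣ (n + 1) then {sg ((n + 1) / 3)} else ∅)) := by
  rw [sg]

lemma sg_odd_eq {n a : ℕ} (h2 : n % 2 = 1) (h3 : n % 3 ≠ 0) (ha : a + 1 = n) :
    sg n = mex {sg a} := by
  subst ha
  rw [sg_succ, if_neg (by omega), if_neg (by omega)]
  simp

lemma sg_even_eq {n a b : ℕ} (h2 : n % 2 = 0) (h3 : n % 3 ≠ 0) (ha : a + 1 = n)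
    (hb : 2 * b = n) : sg n = mex {sg a, sg b} := by
  subst ha
  rw [sg_succ, if_pos (by omega), if_neg (by omega),
    show (a+1)/2 = b by omega]
  simp [← Finset.insert_eq]

lemma sg_odd3_eq {n a c : ℕ} (h2 : n % 2 = 1) (h3 : n % 3 = 0) (ha : a + 1 = n)
    (hc : 3 * c = n) : sg n = mex {sg a, sg c} := by
  subst ha
  rw [sg_succ, if_neg (by omega), if_pos (by omega),
    show (a+1)/3 = c by omega]
  simp [← Finset.insert_eq]

lemma sg_six_eq {n a b c : ℕ} (h2 : n % 2 = 0) (h3 : n % 3 = 0) (ha : a + 1 = n)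
    (hb : 2 * b = n) (hc : 3 * c = n) : sg n = mex {sg a, sg b, sg c} := by
  subst ha
  rw [sg_succ, if_pos (by omega), if_pos (by omega),
    show (a+1)/2 = b by omega, show (a+1)/3 = c by omega]
  simp [← Finset.insert_eq]

lemma sg_odd01 {n : ℕ} (h2 : n % 2 = 1) (h3 : n % 3 ≠ 0) : sg n = 0 ∨ sg n = 1 := by
  rw [sg_odd_eq h2 h3 (show (n-1) + 1 = n by omega)]
  rcases eq_or_ne (sg (n-1)) 0 with h | h
  · right; rw [h]; exact mex_singleton_zero
  · left; exact mex_eq_zero (by simp [Ne.symm h])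

/-! ### small values -/

lemma sg_one : sg 1 = 1 := by
  have h0 : sg 0 = 0 := by rw [sg]
  rw [sg_odd_eq (n := 1) (a := 0) (by omega) (by omega) (by omega), h0]
  exact mex_singleton_zero

lemma sg_two : sg 2 = 0 := by
  rw [sg_even_eq (n := 2) (a := 1) (b := 1) (by omega) (by omega) (by omega) (by omega),
    sg_one]
  exact mex_eq_zero (by simp)

lemma sg_three : sg 3 = 2 := by
  rw [sg_odd3_eq (n := 3) (a := 2) (c := 1) (by omega) (by omega) (by omega) (by omega),
    sg_two, sg_one]
  exact mex_pair_01

/-! ### pattern propagation (pattern A) -/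

lemma stepA {r : ℕ} (hr : 1 ≤ r) (h0 : sg (6*r+1) = 0)
    (hw : ∀ x, 6*r+2 ≤ x → x ≤ 6*r+7 → sg x ≠ 2) : sg (6*r+7) = 0 := by
  have e2 : sg (6*r+2) = mex {sg (6*r+1), sg (3*r+1)} :=
    sg_even_eq (by omega) (by omega) (by omega) (by omega)
  have v2 : sg (6*r+2) = 1 := by
    rcases eq_or_ne (sg (3*r+1)) 1 with h | h
    · exact absurd (show sg (6*r+2) = 2 by rw [e2, h0, h]; exact mex_pair_01)
        (hw _ (by omega) (by omega))
    · rw [e2, h0]; exact mex_pair_zero h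
  have e3 : sg (6*r+3) = mex {sg (6*r+2), sg (2*r+1)} :=
    sg_odd3_eq (by omega) (by omega) (by omega) (by omega)
  have v3 : sg (6*r+3) = 0 := by
    rcases eq_or_ne (sg (2*r+1)) 0 with h | h
    · exact absurd (show sg (6*r+3) = 2 by rw [e3, v2, h]; exact mex_pair_10)
        (hw _ (by omega) (by omega))
    · rw [e3, v2]; exact mex_eq_zero (by simp; omega)
  have e4 : sg (6*r+4) = mex {sg (6*r+3), sg (3*r+2)} :=
    sg_even_eq (by omega) (by omega) (by omega) (by omega)
  have v4 : sg (6*r+4) = 1 := by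
    rcases eq_or_ne (sg (3*r+2)) 1 with h | h
    · exact absurd (show sg (6*r+4) = 2 by rw [e4, v3, h]; exact mex_pair_01)
        (hw _ (by omega) (by omega))
    · rw [e4, v3]; exact mex_pair_zero h
  have v5 : sg (6*r+5) = 0 := by
    rw [sg_odd_eq (n := 6*r+5) (a := 6*r+4) (by omega) (by omega) (by omega)]
    exact mex_eq_zero (by simp; omega)
  have e6 : sg (6*r+6) = mex {sg (6*r+5), sg (3*r+3), sg (2*r+2)} :=
    sg_six_eq (by omega) (by omega) (by omega) (by omega) (by omega)
  have v6 : sg (6*r+6) ≠ 0 := by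
    intro h
    have hnm := mex_notMem ({sg (6*r+5), sg (3*r+3), sg (2*r+2)} : Finset ℕ)
    rw [← e6, h] at hnm
    simp [v5] at hnm
  rw [sg_odd_eq (n := 6*r+7) (a := 6*r+6) (by omega) (by omega) (by omega)]
  exact mex_eq_zero (by simp; omega)

/-! ### the pattern-A contradiction -/

lemma finalA {t : ℕ} (h13 : sg (24*t+13) = 0) (h25 : sg (24*t+25) = 0)
    (hw : ∀ x, 24*t+13 ≤ x → x ≤ 24*t+28 → sg x ≠ 2) : False := by
  -- first half-scale extraction: sg (6t+4) = 1
  have e14 : sg (24*t+14) = mex {sg (24*t+13), sg (12*t+7)} :=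
    sg_even_eq (by omega) (by omega) (by omega) (by omega)
  have h127 : sg (12*t+7) = 0 := by
    rcases sg_odd01 (n := 12*t+7) (by omega) (by omega) with h | h
    · exact h
    · exact absurd (show sg (24*t+14) = 2 by rw [e14, h13, h]; exact mex_pair_01)
        (hw _ (by omega) (by omega))
  have v14 : sg (24*t+14) = 1 := by
    rw [e14, h13, h127]; exact mex_pair_zero (by omega)
  have e15 : sg (24*t+15) = mex {sg (24*t+14), sg (8*t+5)} :=
    sg_odd3_eq (by omega) (by omega) (by omega) (by omega)
  have v15 : sg (24*t+15) = 0 := by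
    rcases eq_or_ne (sg (8*t+5)) 0 with h | h
    · exact absurd (show sg (24*t+15) = 2 by rw [e15, v14, h]; exact mex_pair_10)
        (hw _ (by omega) (by omega))
    · rw [e15, v14]; exact mex_eq_zero (by simp; omega)
  have e16 : sg (24*t+16) = mex {sg (24*t+15), sg (12*t+8)} :=
    sg_even_eq (by omega) (by omega) (by omega) (by omega)
  have h128 : sg (12*t+8) ≠ 1 := by
    intro h
    exact absurd (show sg (24*t+16) = 2 by rw [e16, v15, h]; exact mex_pair_01)
      (hw _ (by omega) (by omega))
  have e128 : sg (12*t+8) = mex {sg (12*t+7), sg (6*t+4)} :=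
    sg_even_eq (by omega) (by omega) (by omega) (by omega)
  have h64 : sg (6*t+4) = 1 := by
    by_contra h
    exact h128 (by rw [e128, h127]; exact mex_pair_zero h)
  -- second half-scale extraction: sg (6t+7) = 1
  have e26 : sg (24*t+26) = mex {sg (24*t+25), sg (12*t+13)} :=
    sg_even_eq (by omega) (by omega) (by omega) (by omega)
  have h1213 : sg (12*t+13) = 0 := by
    rcases sg_odd01 (n := 12*t+13) (by omega) (by omega) with h | h
    · exact h
    · exact absurd (show sg (24*t+26) = 2 by rw [e26, h25, h]; exact mex_pair_01)
        (hw _ (by omega) (by omega))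
  have v26 : sg (24*t+26) = 1 := by
    rw [e26, h25, h1213]; exact mex_pair_zero (by omega)
  have e27 : sg (24*t+27) = mex {sg (24*t+26), sg (8*t+9)} :=
    sg_odd3_eq (by omega) (by omega) (by omega) (by omega)
  have v27 : sg (24*t+27) = 0 := by
    rcases eq_or_ne (sg (8*t+9)) 0 with h | h
    · exact absurd (show sg (24*t+27) = 2 by rw [e27, v26, h]; exact mex_pair_10)
        (hw _ (by omega) (by omega))
    · rw [e27, v26]; exact mex_eq_zero (by simp; omega)
  have e28 : sg (24*t+28) = mex {sg (24*t+27), sg (12*t+14)} :=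
    sg_even_eq (by omega) (by omega) (by omega) (by omega)
  have h1214 : sg (12*t+14) ≠ 1 := by
    intro h
    exact absurd (show sg (24*t+28) = 2 by rw [e28, v27, h]; exact mex_pair_01)
      (hw _ (by omega) (by omega))
  have e1214 : sg (12*t+14) = mex {sg (12*t+13), sg (6*t+7)} :=
    sg_even_eq (by omega) (by omega) (by omega) (by omega)
  have h67 : sg (6*t+7) = 1 := by
    by_contra h
    exact h1214 (by rw [e1214, h1213]; exact mex_pair_zero h)
  -- quarter-scale contradiction
  have v65 : sg (6*t+5) = 0 := by
    rw [sg_odd_eq (n := 6*t+5) (a := 6*t+4) (by omega) (by omega) (by omega)]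
    exact mex_eq_zero (by simp; omega)
  have e66 : sg (6*t+6) = mex {sg (6*t+5), sg (3*t+3), sg (2*t+2)} :=
    sg_six_eq (by omega) (by omega) (by omega) (by omega) (by omega)
  have v66 : sg (6*t+6) ≠ 0 := by
    intro h
    have hnm := mex_notMem ({sg (6*t+5), sg (3*t+3), sg (2*t+2)} : Finset ℕ)
    rw [← e66, h] at hnm
    simp [v65] at hnm
  have : sg (6*t+7) = 0 := by
    rw [sg_odd_eq (n := 6*t+7) (a := 6*t+6) (by omega) (by omega) (by omega)]
    exact mex_eq_zero (by simp; omega)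
  omega

/-! ### the window theorem -/

lemma window (a : ℕ) (ha : 3 ≤ a) : ∃ w, a ≤ w ∧ w ≤ a + 45 ∧ sg w = 2 := by
  by_contra hcon
  push_neg at hcon
  set m := (a + 5) / 12 with hm
  have hma : a ≤ 12*m + 7 ∧ 12*m + 7 ≤ a + 12 := by omega
  rcases sg_odd01 (n := 12*m+7) (by omega) (by omega) with hu | hu
  · -- pattern A case
    have prop : ∀ k, k ≤ 5 → sg (12*m + 6*k + 7) = 0 := by
      intro k
      induction k with
      | zero => intro _; simpa using hu
      | succ p ih =>
        intro hp
        have h1 := stepA (r := 2*m+p+1) (by omega)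
          (by rw [show 6*(2*m+p+1)+1 = 12*m+6*p+7 by ring]; exact ih (by omega))
          (fun x hx1 hx2 => hcon x (by omega) (by omega))
        rw [show 6*(2*m+p+1)+7 = 12*m+6*(p+1)+7 by ring] at h1
        exact h1
    rcases Nat.even_or_odd m with ⟨q, hq⟩ | ⟨q, hq⟩
    · -- m = q + q
      refine finalA (t := q) ?_ ?_ (fun x hx1 hx2 => hcon x (by omega) (by omega))
      · have := prop 1 (by omega); rw [show 12*m+6*1+7 = 24*q+13 by omega] at this; exact this
      · have := prop 3 (by omega); rw [show 12*m+6*3+7 = 24*q+25 by omega] at this; exact this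
    · -- m = 2*q + 1
      refine finalA (t := q+1) ?_ ?_ (fun x hx1 hx2 => hcon x (by omega) (by omega))
      · have := prop 3 (by omega); rw [show 12*m+6*3+7 = 24*(q+1)+13 by omega] at this; exact this
      · have := prop 5 (by omega); rw [show 12*m+6*5+7 = 24*(q+1)+25 by omega] at this; exact this
  · -- pattern B case
    have e8 : sg (12*m+8) = mex {sg (12*m+7), sg (6*m+4)} :=
      sg_even_eq (by omega) (by omega) (by omega) (by omega)
    have h64 : sg (6*m+4) ≠ 0 := by
      intro h
      exact hcon (12*m+8) (by omega) (by omega) (by rw [e8, hu, h]; exact mex_pair_10)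
    have v8 : sg (12*m+8) = 0 := by
      rw [e8, hu]; exact mex_eq_zero (by simp; omega)
    have e9 : sg (12*m+9) = mex {sg (12*m+8), sg (4*m+3)} :=
      sg_odd3_eq (by omega) (by omega) (by omega) (by omega)
    have v9 : sg (12*m+9) = 1 := by
      rcases eq_or_ne (sg (4*m+3)) 1 with h | h
      · exact absurd (show sg (12*m+9) = 2 by rw [e9, v8, h]; exact mex_pair_01)
          (hcon _ (by omega) (by omega))
      · rw [e9, v8]; exact mex_pair_zero h
    have v65 : sg (6*m+5) = 0 := by
      rw [sg_odd_eq (n := 6*m+5) (a := 6*m+4) (by omega) (by omega) (by omega)]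
      exact mex_eq_zero (by simp; omega)
    have : sg (12*m+10) = 2 := by
      rw [sg_even_eq (n := 12*m+10) (a := 12*m+9) (b := 6*m+5)
        (by omega) (by omega) (by omega) (by omega), v9, v65]
      exact mex_pair_10
    exact hcon (12*m+10) (by omega) (by omega) this

theorem gap_two (n : ℕ) (hn : 3 < n) :
    ∃ i : ℕ, 1 ≤ i ∧ i ≤ 49 ∧ i ≤ n - 3 ∧ sg (n - i) = 2 := by
  rcases le_or_gt n 52 with h | h
  · exact ⟨n - 3, by omega, by omega, by omega,
      by rw [show n - (n-3) = 3 by omega]; exact sg_three⟩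
  · obtain ⟨w, hw1, hw2, hw3⟩ := window (n - 49) (by omega)
    exact ⟨n - w, by omega, by omega, by omega,
      by rw [show n - (n-w) = w by omega]; exact hw3⟩
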